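/- arXiv:1902.10696 — 2 statements merged into one kernel-verified Lean document; each statement's English description precedes it below -/
import Mathlib

section
/- Let H = H_Γ be the right-angled Artin group of a finite graph Γ, and let C_1, …, C_r ⊆ V be cliques of Γ with ∩_{i=1}^r C_i = ∅. Then for any elements g_1, …, g_r ∈ H, the intersection ∩_{i=1}^r g_i [C_i] g_i^{−1} is the trivial subgroup. -/
/-- The commutator relations of the right-angled Artin group of a graph. -/
def raagRels {V : Type} (G : SimpleGraph V) : Set (FreeGroup V) :=
  {w | ∃ u v : V, G.Adj u v ∧
    w = FreeGroup.of u * FreeGroup.of v * (FreeGroup.of u)⁻¹ * (FreeGroup.of v)⁻¹}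

/-- The right-angled Artin group of a graph. -/
abbrev RAAG {V : Type} (G : SimpleGraph V) := PresentedGroup (raagRels G)

/-- The generator of `RAAG G` corresponding to a vertex. -/
def raagGen {V : Type} (G : SimpleGraph V) (v : V) : RAAG G := PresentedGroup.of v

/-!
Write `f_A` for the retraction of `RAAG G` onto the subgroup `[A]` generated by `A ⊆ V`.
If `x = g c g⁻¹` with `c ∈ [A]`, then `f_B x = f_B g · f_B c · (f_B g)⁻¹`, so `f_B x = 1` as soon
as `f_B c = f_{A ∩ B} c = 1`. Induction on the number of conjugates therefore shows that `f_B`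
kills `⋂ᵢ gᵢ [Cᵢ] gᵢ⁻¹` whenever `B ∩ ⋂ᵢ Cᵢ = ∅`; the theorem is the case `B = V`, where
`f_V` is the identity.
-/

namespace RAAG

variable {V : Type} (G : SimpleGraph V)

theorem raagGen_commute_of_adj {u v : V} (h : G.Adj u v) :
    Commute (raagGen G u) (raagGen G v) := by
  rw [← commutatorElement_eq_one_iff_commute, commutatorElement_def]
  exact PresentedGroup.one_of_mem ⟨u, v, h, rfl⟩

open Classical in
noncomputable def retraction (A : Set V) : RAAG G →* RAAG G :=
  PresentedGroup.toGroup (f := fun v => if v ∈ A then raagGen G v else 1) <| by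
    rintro w ⟨u, v, huv, rfl⟩
    simp only [map_mul, map_inv, FreeGroup.lift_apply_of]
    by_cases hu : u ∈ A <;> by_cases hv : v ∈ A <;> simp [hu, hv, (raagGen_commute_of_adj G huv).eq]

variable {G}

@[simp]
theorem retraction_raagGen_of_mem {A : Set V} {v : V} (hv : v ∈ A) :
    retraction G A (raagGen G v) = raagGen G v := by
  simp [retraction, raagGen, hv]

@[simp]
theorem retraction_raagGen_of_notMem {A : Set V} {v : V} (hv : v ∉ A) :
    retraction G A (raagGen G v) = 1 := by
  simp [retraction, raagGen, hv]

theorem retraction_comp (A B : Set V) :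
    (retraction G A).comp (retraction G B) = retraction G (A ∩ B) := by
  refine PresentedGroup.ext fun v => ?_
  change retraction G A (retraction G B (raagGen G v)) = retraction G (A ∩ B) (raagGen G v)
  by_cases hB : v ∈ B <;> by_cases hA : v ∈ A <;> simp [hA, hB]

theorem retraction_empty : retraction G ∅ = 1 :=
  PresentedGroup.ext fun v => retraction_raagGen_of_notMem (Set.notMem_empty v)

theorem retraction_univ : retraction G Set.univ = MonoidHom.id (RAAG G) :=
  PresentedGroup.ext fun v => retraction_raagGen_of_mem (Set.mem_univ v)

theorem retraction_eq_self_of_mem_closure {A : Set V} {x : RAAG G}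
    (hx : x ∈ Subgroup.closure (raagGen G '' A)) : retraction G A x = x := by
  induction hx using Subgroup.closure_induction with
  | mem y hy =>
    obtain ⟨v, hv, rfl⟩ := hy
    exact retraction_raagGen_of_mem hv
  | one => exact map_one _
  | mul a b _ _ ha hb => rw [map_mul, ha, hb]
  | inv a _ ha => rw [map_inv, ha]

theorem retraction_eq_one_of_forall_mem_conj {ι : Type*} (s : Finset ι) (C : ι → Set V)
    (g : ι → RAAG G) {B : Set V} (hB : B ∩ ⋂ i ∈ s, C i = ∅) {x : RAAG G}
    (hx : ∀ i ∈ s,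
      x ∈ (Subgroup.closure (raagGen G '' C i)).map (MulAut.conj (g i)).toMonoidHom) :
    retraction G B x = 1 := by
  classical
  induction s using Finset.induction_on generalizing B with
  | empty =>
    obtain rfl : B = ∅ := by simpa using hB
    rw [retraction_empty, MonoidHom.one_apply]
  | insert j s _ ih =>
    have hBj : (B ∩ C j) ∩ ⋂ i ∈ s, C i = ∅ := by
      rwa [Finset.set_biInter_insert, ← Set.inter_assoc] at hB
    have hxBj := ih hBj fun i hi => hx i (Finset.mem_insert_of_mem hi)
    obtain ⟨c, hc, rfl⟩ := hx j (Finset.mem_insert_self j s)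
    have hcB : retraction G B c = 1 := by
      have hfix := retraction_eq_self_of_mem_closure hc
      rw [← retraction_comp, MonoidHom.comp_apply] at hxBj
      simpa [hfix] using hxBj
    simp [hcB]

end RAAG

theorem stmt4_general {V : Type} [Fintype V] [DecidableEq V] (G : SimpleGraph V) (r : ℕ)
    (C : Fin r → Finset V)
    (hempty : Finset.univ.inf C = ∅) (g : Fin r → RAAG G) :
    (⨅ i, (Subgroup.closure (raagGen G '' (C i))).map
        (MulAut.conj (g i)).toMonoidHom) = ⊥ := by
  refine (Subgroup.eq_bot_iff_forall _).2 fun x hx => ?_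
  have hinter : Set.univ ∩ ⋂ i ∈ Finset.univ, (C i : Set V) = ∅ := by
    refine Set.eq_empty_of_forall_notMem fun v hv => ?_
    have hv' : v ∈ Finset.univ.inf C := Finset.mem_inf.2 (by simpa using hv)
    simp [hempty] at hv'
  simpa [RAAG.retraction_univ] using RAAG.retraction_eq_one_of_forall_mem_conj Finset.univ
    (fun i => (C i : Set V)) g hinter fun i _ => Subgroup.mem_iInf.1 hx i

theorem stmt4 {V : Type} [Fintype V] [DecidableEq V] (G : SimpleGraph V) (r : ℕ)
    (C : Fin r → Finset V) (hcl : ∀ i, G.IsClique ((C i : Set V)))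
    (hempty : Finset.univ.inf C = ∅) (g : Fin r → RAAG G) :
    (⨅ i, (Subgroup.closure (raagGen G '' (C i))).map
        (MulAut.conj (g i)).toMonoidHom) = ⊥ :=
  stmt4_general G r C hempty g
end

section
/- Let Γ = (V,E) be a finite graph with |V| = n. Then for every r > n one has z_r(Γ) = z_{r−1}(Γ) + c(Γ), and consequently z_r(Γ) = z_n(Γ) + (r − n)·c(Γ) for all r ≥ n. -/
/-- The clique number of a finite simple graph: the maximal cardinality of a clique. -/
noncomputable def cliqueNum {V : Type} [Fintype V] (G : SimpleGraph V) : ℕ :=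
  sSup {n | ∃ C : Finset V, G.IsClique (C : Set V) ∧ C.card = n}

/-- `zNum G r` : the maximum of `∑ |C i|` over sequences of `r` cliques with empty
total intersection. -/
noncomputable def zNum {V : Type} [Fintype V] [DecidableEq V] (G : SimpleGraph V) (r : ℕ) : ℕ :=
  sSup {m | ∃ C : Fin r → Finset V, (∀ i, G.IsClique ((C i : Set V))) ∧
    Finset.univ.inf C = ∅ ∧ m = ∑ i, (C i).card}

section aux

variable {V : Type} [Fintype V] [DecidableEq V] (G : SimpleGraph V)

omit [DecidableEq V] in
lemma cliqueNum_spec :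
    (∃ C : Finset V, G.IsClique (C : Set V) ∧ C.card = cliqueNum G) ∧
    (∀ C : Finset V, G.IsClique (C : Set V) → C.card ≤ cliqueNum G) := by
  have hbdd : BddAbove {n | ∃ C : Finset V, G.IsClique (C : Set V) ∧ C.card = n} := by
    refine ⟨Fintype.card V, ?_⟩
    rintro m ⟨C, _, rfl⟩
    exact C.card_le_univ
  have hne : {n | ∃ C : Finset V, G.IsClique (C : Set V) ∧ C.card = n}.Nonempty :=
    ⟨0, ∅, by simp, by simp⟩
  constructor
  · exact Nat.sSup_mem hne hbdd
  · intro C hC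
    exact le_csSup hbdd ⟨C, hC, rfl⟩

lemma zSet_bdd (r : ℕ) :
    BddAbove {m | ∃ C : Fin r → Finset V, (∀ i, G.IsClique ((C i : Set V))) ∧
      Finset.univ.inf C = ∅ ∧ m = ∑ i, (C i).card} := by
  refine ⟨r * Fintype.card V, ?_⟩
  rintro m ⟨C, _, _, rfl⟩
  calc ∑ i, (C i).card ≤ ∑ _i : Fin r, Fintype.card V :=
        Finset.sum_le_sum fun i _ => (C i).card_le_univ
    _ = r * Fintype.card V := by simp [Finset.sum_const, mul_comm]

lemma zSet_nonempty (n : ℕ) (hn : Fintype.card V = n) (s : ℕ) (hns : n ≤ s) :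
    {m | ∃ C : Fin s → Finset V, (∀ i, G.IsClique ((C i : Set V))) ∧
      Finset.univ.inf C = ∅ ∧ m = ∑ i, (C i).card}.Nonempty := by
  rcases Nat.eq_zero_or_pos s with hs | hs
  · subst hs
    have hn0 : n = 0 := Nat.le_zero.mp hns
    have : IsEmpty V := Fintype.card_eq_zero_iff.mp (by omega)
    refine ⟨0, fun i => ∅, by simp, ?_, by simp⟩
    simp [Finset.univ_eq_empty (α := Fin 0)]
  · refine ⟨0, fun _ => ∅, by simp, ?_, by simp⟩
    have : (Finset.univ : Finset (Fin s)).Nonempty := by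
      simpa [Finset.univ_nonempty_iff] using Fin.pos_iff_nonempty.mp hs
    exact Finset.inf_const this _

lemma zLower (s : ℕ)
    (h : {m | ∃ C : Fin s → Finset V, (∀ i, G.IsClique ((C i : Set V))) ∧
      Finset.univ.inf C = ∅ ∧ m = ∑ i, (C i).card}.Nonempty) :
    zNum G s + cliqueNum G ≤ zNum G (s + 1) := by
  obtain ⟨D, hDcl, hDinf, hDsum⟩ : ∃ D : Fin s → Finset V,
      (∀ i, G.IsClique ((D i : Set V))) ∧ Finset.univ.inf D = ∅ ∧
      zNum G s = ∑ i, (D i).card := Nat.sSup_mem h (zSet_bdd G s)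
  obtain ⟨⟨M, hMcl, hMcard⟩, -⟩ := cliqueNum_spec G
  set C : Fin (s + 1) → Finset V := Fin.snoc D M with hC
  have hCcl : ∀ i, G.IsClique ((C i : Set V)) := by
    intro i
    refine Fin.lastCases ?_ ?_ i
    · simpa [hC, Fin.snoc_last] using hMcl
    · intro j; simpa [hC, Fin.snoc_castSucc] using hDcl j
  have hCinf : Finset.univ.inf C = ∅ := by
    rw [← Finset.bot_eq_empty, ← le_bot_iff]
    calc Finset.univ.inf C ≤ Finset.univ.inf D := by
          apply Finset.le_inf
          intro j _
          have := Finset.inf_le (Finset.mem_univ j.castSucc) (f := C)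
          simpa [hC, Fin.snoc_castSucc] using this
      _ = ⊥ := by rw [hDinf, Finset.bot_eq_empty]
  have hmem : zNum G s + cliqueNum G ∈ {m | ∃ C : Fin (s+1) → Finset V,
      (∀ i, G.IsClique ((C i : Set V))) ∧ Finset.univ.inf C = ∅ ∧ m = ∑ i, (C i).card} := by
    refine ⟨C, hCcl, hCinf, ?_⟩
    rw [Fin.sum_univ_castSucc]
    simp only [hC, Fin.snoc_castSucc, Fin.snoc_last]
    rw [hDsum, hMcard]
  exact le_csSup (zSet_bdd G (s + 1)) hmem

lemma zUpper (n : ℕ) (hn : Fintype.card V = n) (s : ℕ) (hns : n ≤ s) :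
    zNum G (s + 1) ≤ zNum G s + cliqueNum G := by
  apply csSup_le'
  rintro m ⟨C, hCcl, hCinf, rfl⟩
  -- the decreasing chain of prefix intersections
  set f : ℕ → Finset V := fun j =>
    (Finset.univ.filter (fun i : Fin (s + 1) => (i : ℕ) < j)).inf C with hf
  have hfmono : ∀ j, f (j + 1) ≤ f j := by
    intro j
    apply Finset.le_inf
    intro b hb
    apply Finset.inf_le
    simp only [Finset.mem_filter, Finset.mem_univ, true_and] at hb ⊢
    omega
  have hstep : ∃ j < s + 1, f (j + 1) = f j := by
    by_contra hcon
    push_neg at hcon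
    have hcard : ∀ j, j ≤ s + 1 → (f j).card + j ≤ n := by
      intro j hj
      induction j with
      | zero => simpa [hn] using (f 0).card_le_univ
      | succ j ih =>
        have hlt : (f (j + 1)).card < (f j).card :=
          Finset.card_lt_card (lt_of_le_of_ne (hfmono j) (hcon j (by omega)))
        have := ih (by omega)
        omega
    have := hcard (s + 1) le_rfl
    omega
  obtain ⟨j, hj, hfj⟩ := hstep
  set k : Fin (s + 1) := ⟨j, hj⟩ with hk
  have hfjk : f j ≤ C k := by
    rw [← hfj]
    exact Finset.inf_le (by simp [hk])
  set D : Fin s → Finset V := fun i => C (k.succAbove i) with hD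
  have hDle : ∀ i : Fin (s + 1), i ≠ k → Finset.univ.inf D ≤ C i := by
    intro i hik
    obtain ⟨i', hi'⟩ := Fin.exists_succAbove_eq hik
    rw [← hi']
    exact Finset.inf_le (Finset.mem_univ i')
  have hDinf : Finset.univ.inf D = ∅ := by
    rw [← Finset.bot_eq_empty, ← le_bot_iff]
    have hle : Finset.univ.inf D ≤ Finset.univ.inf C := by
      apply Finset.le_inf
      intro i _
      by_cases hik : i = k
      · subst hik
        refine le_trans ?_ hfjk
        apply Finset.le_inf
        intro b hb
        simp only [Finset.mem_filter] at hb
        exact hDle b fun hbk => absurd hb.2 (by simp [hbk, hk])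
      · exact hDle i hik
    rw [hCinf] at hle
    exact le_trans hle (by simp)
  have hDsum : ∑ i, (D i).card ≤ zNum G s :=
    le_csSup (zSet_bdd G s) ⟨D, fun i => hCcl _, hDinf, rfl⟩
  have hkcard : (C k).card ≤ cliqueNum G := (cliqueNum_spec G).2 _ (hCcl k)
  calc ∑ i, (C i).card = (C k).card + ∑ i, (D i).card := Fin.sum_univ_succAbove _ k
    _ ≤ cliqueNum G + zNum G s := add_le_add hkcard hDsum
    _ = zNum G s + cliqueNum G := add_comm _ _

end aux

theorem stmt8 {V : Type} [Fintype V] [DecidableEq V] (G : SimpleGraph V) (n : ℕ)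
    (hn : Fintype.card V = n) :
    (∀ r : ℕ, n < r → zNum G r = zNum G (r - 1) + cliqueNum G) ∧
    (∀ r : ℕ, n ≤ r → zNum G r = zNum G n + (r - n) * cliqueNum G) := by
  have part1 : ∀ r : ℕ, n < r → zNum G r = zNum G (r - 1) + cliqueNum G := by
    intro r hr
    obtain ⟨s, rfl⟩ : ∃ s, r = s + 1 := ⟨r - 1, by omega⟩
    have hns : n ≤ s := by omega
    simp only [Nat.add_sub_cancel]
    exact le_antisymm (zUpper G n hn s hns)
      (zLower G s (zSet_nonempty G n hn s hns))
  refine ⟨part1, ?_⟩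
  have part2 : ∀ d : ℕ, zNum G (n + d) = zNum G n + d * cliqueNum G := by
    intro d
    induction d with
    | zero => simp
    | succ d ih =>
      have h1 := part1 (n + d + 1) (by omega)
      have h2 : n + d + 1 - 1 = n + d := by omega
      rw [show n + (d + 1) = n + d + 1 by omega, h1, h2, ih, Nat.succ_mul]
      omega
  intro r hr
  have := part2 (r - n)
  rw [show n + (r - n) = r by omega] at this
  exact this
end
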